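/- Let (a, x) and (b, y) be pairs of coprime integers with 1 ≤ a ≤ x, 1 ≤ b ≤ y, and ay - bx = 1. Then (a+b, x+y)_q = (a, x)_q + q^{⌈x/y⌉} · (b, y)_q. -/

import Mathlib

/-!
The identity holds for all `a * y = b * x + 1`, including the degenerate cases `b = 0` and `x = 0`,
with exponent `⌊x/y⌋ + 1` (which is `⌈x/y⌉` once `y ≥ 2`); this is proved by well-founded
induction on `a + x + b + y`. The recursion of `W` applied to `(a + b, x + y)`, `(a, x)` and
`(b, y)` can be run with one common quotient, so the residues of `(a + b, x + y)` are the sums of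
those of `(a, x)` and `(b, y)`; this splits the identity into two instances for smaller pairs
again satisfying `a * y = b * x + 1`. Their exponents agree with the original one because
`⌊x/y⌋ = ⌊(a - 1)/b⌋` depends only on `a` and `b`. Residues may be taken in `[0, A]` rather than
`[0, A)` because `W 0 n = W n 0`. Only for `y = 1` is there no common quotient; that case is
computed directly.
-/

open Polynomial

/-- The `q`-integer `[c]_q = 1 + q + ⋯ + q^{c-1}` as a polynomial in `ℤ[q]`. -/
noncomputable def qInt (c : ℕ) : Polynomial ℤ := ∑ i ∈ Finset.range c, X ^ i

/-- The polynomial `(a, b)_q ∈ ℤ[q]` associated to a pair of coprime positive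
integers: `(1, n)_q = (n, 1)_q = [n+1]_q`; if `a < b` then
`(a,b)_q = (a-r, r)_q + q·(a, b-a)_q` with `r = b % a`; if `a > b` then
`(a,b)_q = (a-b, b)_q + q^⌈a/b⌉·(r, b-r)_q` with `r = a % b`.
(Values on non-coprime or zero inputs are junk.) -/
noncomputable def W : ℕ → ℕ → Polynomial ℤ
  | 1, b => qInt (b + 1)
  | a, 1 => qInt (a + 1)
  | 0, _ => 0
  | _, 0 => 0
  | a + 2, b + 2 =>
    if a < b then
      W (a + 2 - (b + 2) % (a + 2)) ((b + 2) % (a + 2)) + X * W (a + 2) (b - a)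
    else
      W (a - b) (b + 2) +
        X ^ ((a + 2 + (b + 2) - 1) / (b + 2)) *
          W ((a + 2) % (b + 2)) (b + 2 - (a + 2) % (b + 2))
  termination_by a b => a + b
  decreasing_by
  · have := Nat.mod_lt (b + 2) (show 0 < a + 2 by omega); omega
  · omega
  · omega
  · have := Nat.mod_lt (a + 2) (show 0 < b + 2 by omega); omega

/-- The sequence of digits of the negative continued fraction expansion
`x/a = [c₁, …, c_l]⁻` (each `cᵢ = ⌈·⌉` of the current fraction). By convention
`ncfDigits x 0 = []` (for `1/0 = ∞`) and `ncfDigits x 1 = [x]`. -/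
def ncfDigits : ℕ → ℕ → List ℕ
  | _, 0 => []
  | x, 1 => [x]
  | x, a + 2 =>
      (x + (a + 2) - 1) / (a + 2) ::
        ncfDigits (a + 2) ((x + (a + 2) - 1) / (a + 2) * (a + 2) - x)
  termination_by x a => a
  decreasing_by
    have := Nat.div_mul_le_self (x + (a + 2) - 1) (a + 2); omega

/-- The (coprime) numerator and denominator of the Morier-Genoud–Ovsienko
`q`-deformation of the negative continued fraction `[c₁, …, c_l]⁻`, computed by
the continuant recursion `(N, D) ↦ ([c]_q·N - q^{c-1}·D, N)`, with `(1, 0)` for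
the empty list. -/
noncomputable def qCF : List ℕ → Polynomial ℤ × Polynomial ℤ
  | [] => (1, 0)
  | c :: rest =>
      let p := qCF rest
      (qInt c * p.1 - X ^ (c - 1) * p.2, p.1)

/-- Numerator `N_q(x/a)` of the Morier-Genoud–Ovsienko `q`-rational `[x/a]_q`. -/
noncomputable def Nq (x a : ℕ) : Polynomial ℤ := (qCF (ncfDigits x a)).1

/-- Denominator `D_q(x/a)` of the Morier-Genoud–Ovsienko `q`-rational `[x/a]_q`. -/
noncomputable def Dq (x a : ℕ) : Polynomial ℤ := (qCF (ncfDigits x a)).2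

/-- The normalized Jones polynomial `J_{x/a}(q) = q·N_q(x/a) + (1-q)·D_q(x/a)`. -/
noncomputable def Jq (x a : ℕ) : Polynomial ℤ := X * Nq x a + (1 - X) * Dq x a

theorem qInt_succ (n : ℕ) : qInt (n + 1) = qInt n + X ^ n := Finset.sum_range_succ _ n

theorem W_one_left (n : ℕ) : W 1 n = qInt (n + 1) := W.eq_1 n

theorem W_one_right (n : ℕ) : W n 1 = qInt (n + 1) := by
  rcases eq_or_ne n 1 with rfl | hn
  · exact W.eq_1 1
  · exact W.eq_2 n hn

theorem W_zero_comm (n : ℕ) : W 0 n = W n 0 := by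
  match n with
  | 0 => rfl
  | 1 => rw [W_one_right, W_one_left]
  | n + 2 => rw [W.eq_3 _ (by omega), W.eq_4 _ (by omega) (by omega)]

theorem W_self (n : ℕ) : W n n = (1 + X) * W n 0 := by
  match n with
  | 0 => rw [W.eq_3 0 (by omega), mul_zero]
  | 1 => simp [W_one_left, qInt, Finset.sum_range_succ]
  | n + 2 =>
    rw [W.eq_5, if_neg (lt_irrefl n), Nat.mod_self, Nat.sub_self, Nat.sub_zero,
      W.eq_3 _ (by omega), W.eq_4 _ (by omega) (by omega)]
    ring

theorem W_of_lt {A B : ℕ} (hA : 1 ≤ A) (hAB : A < B) :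
    W A B = W (A - B % A) (B % A) + X * W A (B - A) := by
  match A, B, hA, hAB with
  | 1, B, _, _ =>
    rw [Nat.mod_one, W_one_left, W_one_left, W_one_left, Nat.sub_add_cancel (by omega), qInt,
      qInt, geom_sum_succ]
    simp [qInt, add_comm]
  | a + 2, b + 2, _, hab =>
    rw [W.eq_5, if_pos (by omega), show b - a = b + 2 - (a + 2) by omega]

theorem W_of_gt {A B : ℕ} (hB : 1 ≤ B) (hBA : B < A) :
    W A B = W (A - B) B + X ^ ((A + B - 1) / B) * W (A % B) (B - A % B) := by
  match A, B, hB, hBA with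
  | A, 1, _, _ =>
    rw [Nat.mod_one, W_one_right, W_one_right, W_one_right, Nat.sub_add_cancel (by omega),
      Nat.add_sub_cancel, Nat.div_one, qInt, qInt, geom_sum_succ']
    simp [qInt, add_comm]
  | a + 2, b + 2, _, hab =>
    rw [W.eq_5, if_neg (by omega), show a - b = a + 2 - (b + 2) by omega]

theorem W_of_le_of_eq_mul_add {A B k r : ℕ} (hA : 1 ≤ A) (hAB : A ≤ B) (hB : B = A * k + r)
    (hr : r ≤ A) : W A B = W (A - r) r + X * W A (B - A) := by
  have hres : W (A - r) r = W (A - B % A) (B % A) := by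
    rcases hr.lt_or_eq with hr | rfl
    · rw [hB, Nat.mul_add_mod, Nat.mod_eq_of_lt hr]
    · rw [hB, Nat.mul_add_mod, Nat.mod_self, Nat.sub_self, Nat.sub_zero, W_zero_comm]
  rcases hAB.lt_or_eq with hAB | rfl
  · rw [W_of_lt hA hAB, hres]
  · rw [hres, W_self, Nat.mod_self, Nat.sub_self, Nat.sub_zero]
    ring

theorem W_of_gt_of_eq_mul_add {A B k s : ℕ} (hB : 1 ≤ B) (hBA : B < A) (hA : A = B * k + s)
    (hs : 1 ≤ s) (hsB : s ≤ B) :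
    W A B = W (A - B) B + X ^ (k + 1) * W s (B - s) := by
  have hexp : (A + B - 1) / B = k + 1 := by
    rw [show A + B - 1 = (s - 1) + B * (k + 1) by rw [hA, mul_add]; omega,
      Nat.add_mul_div_left _ _ hB, Nat.div_eq_of_lt (by omega), zero_add]
  have hres : W (A % B) (B - A % B) = W s (B - s) := by
    rcases hsB.lt_or_eq with hsB | rfl
    · rw [hA, Nat.mul_add_mod, Nat.mod_eq_of_lt hsB]
    · rw [hA, Nat.mul_add_mod, Nat.mod_self, Nat.sub_self, Nat.sub_zero, W_zero_comm]
  rw [W_of_gt hB hBA, hexp, hres]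

theorem div_eq_of_mul_eq_mul_add_one {a x b y : ℕ} (h : a * y = b * x + 1) (hb : 0 < b) :
    x / y = (a - 1) / b := by
  have hy : 0 < y := Nat.pos_of_ne_zero (by rintro rfl; omega)
  refine eq_of_forall_le_iff fun k => ?_
  rw [Nat.le_div_iff_mul_le hy, Nat.le_div_iff_mul_le hb]
  constructor
  · intro hk
    have : b * (k * y) ≤ b * x := Nat.mul_le_mul_left b hk
    have : k * b < a := by nlinarith
    omega
  · intro hk
    have ha : 0 < a := Nat.pos_of_ne_zero (by rintro rfl; omega)
    have : k * b * y < a * y := Nat.mul_lt_mul_of_pos_right (by omega) hy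
    have : b * (k * y) ≤ b * x := by nlinarith
    exact Nat.le_of_mul_le_mul_left this hb

theorem sub_mul_eq_of_mul_eq_mul_add_one {a x b y : ℕ} (h : a * y = b * x + 1) (hxa : x ≤ a)
    (hyb : y ≤ b) : (a - x) * y = (b - y) * x + 1 := by
  zify [hxa, hyb] at h ⊢
  linear_combination h

theorem mul_sub_eq_of_mul_eq_mul_add_one {a x b y : ℕ} (h : a * y = b * x + 1) (hax : a ≤ x)
    (hby : b ≤ y) : a * (y - b) = b * (x - a) + 1 := by
  zify [hax, hby] at h ⊢
  linear_combination h

theorem exists_eq_mul_add_of_mul_eq_mul_add_one {a x b y : ℕ} (h : a * y = b * x + 1)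
    (ha : 0 < a) (hb : 0 < b) :
    ∃ f ra rb, x = a * f + ra ∧ y = b * f + rb ∧ ra < a ∧ rb ≤ b ∧ a * rb = b * ra + 1 := by
  have hx := (Nat.div_add_mod x a).symm
  have hra := Nat.mod_lt x ha
  set f := x / a
  set ra := x % a
  have hlt : b * f < y := by
    have : a * (b * f) < a * y := by rw [h, hx]; nlinarith
    exact Nat.lt_of_mul_lt_mul_left this
  have hdet : a * (y - b * f) = b * ra + 1 := by
    zify [hlt.le] at h hx ⊢
    rw [hx] at h
    linear_combination h
  refine ⟨f, ra, y - b * f, hx, by omega, hra, ?_, hdet⟩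
  by_contra! hb'
  have : a * b < a * (y - b * f) := Nat.mul_lt_mul_of_pos_left hb' ha
  nlinarith

theorem W_add_of_le_of_eq_mul_add {a x b y f ra rb e : ℕ} (ha : 1 ≤ a) (hb : 1 ≤ b)
    (hax : a ≤ x) (hby : b ≤ y) (hx : x = a * f + ra) (hy : y = b * f + rb) (hra : ra ≤ a)
    (hrb : rb ≤ b)
    (h₁ : W ((a - ra) + (b - rb)) (ra + rb) = W (a - ra) ra + X ^ e * W (b - rb) rb)
    (h₂ : W (a + b) ((x - a) + (y - b)) = W a (x - a) + X ^ e * W b (y - b)) :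
    W (a + b) (x + y) = W a x + X ^ e * W b y := by
  have hsum : x + y = (a + b) * f + (ra + rb) := by rw [hx, hy]; ring
  rw [W_of_le_of_eq_mul_add (by omega) (by omega) hsum (by omega),
    W_of_le_of_eq_mul_add ha hax hx hra, W_of_le_of_eq_mul_add hb hby hy hrb,
    show a + b - (ra + rb) = (a - ra) + (b - rb) by omega,
    show x + y - (a + b) = (x - a) + (y - b) by omega, h₁, h₂]
  ring

theorem W_add_of_gt_of_eq_mul_add {a x b y k sa sb e : ℕ} (hx : 1 ≤ x) (hy : 1 ≤ y)
    (hxa : x < a) (hyb : y < b) (ha : a = x * k + sa) (hb : b = y * k + sb) (hsa : 1 ≤ sa)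
    (hsax : sa ≤ x) (hsb : 1 ≤ sb) (hsby : sb ≤ y)
    (h₁ : W (sa + sb) ((x - sa) + (y - sb)) = W sa (x - sa) + X ^ e * W sb (y - sb))
    (h₂ : W ((a - x) + (b - y)) (x + y) = W (a - x) x + X ^ e * W (b - y) y) :
    W (a + b) (x + y) = W a x + X ^ e * W b y := by
  have hsum : a + b = (x + y) * k + (sa + sb) := by rw [ha, hb]; ring
  rw [W_of_gt_of_eq_mul_add (by omega) (by omega) hsum (by omega) (by omega),
    W_of_gt_of_eq_mul_add hx hxa ha hsa hsax, W_of_gt_of_eq_mul_add hy hyb hb hsb hsby,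
    show a + b - (x + y) = (a - x) + (b - y) by omega,
    show x + y - (sa + sb) = (x - sa) + (y - sb) by omega, h₁, h₂]
  ring

theorem W_add_one_of_eq_mul_add_one {a x b : ℕ} (hx : 1 ≤ x) (hb : 1 ≤ b) (ha : a = b * x + 1)
    (h₂ : W ((a - x) + (b - 1)) (x + 1) = W (a - x) x + X ^ (x + 1) * W (b - 1) 1) :
    W (a + b) (x + 1) = W a x + X ^ (x + 1) * W b 1 := by
  have hxa : x < a := by nlinarith
  rw [W_of_gt_of_eq_mul_add (k := b) (s := 1) (by omega) (by omega) (by rw [ha]; ring) le_rfl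
      (by omega),
    W_of_gt_of_eq_mul_add (k := b) (s := 1) hx hxa (by rw [ha]; ring) le_rfl hx,
    show a + b - (x + 1) = (a - x) + (b - 1) by omega, h₂]
  obtain ⟨x, rfl⟩ := Nat.exists_eq_add_of_le' hx
  obtain ⟨b, rfl⟩ := Nat.exists_eq_add_of_le' hb
  simp only [W_one_left, W_one_right, Nat.add_sub_cancel, qInt_succ]
  ring

theorem W_add_of_mul_eq_mul_add_one {a x b y : ℕ} (h : a * y = b * x + 1) :
    W (a + b) (x + y) = W a x + X ^ (x / y + 1) * W b y := by
  have ha : 0 < a := Nat.pos_of_ne_zero (by rintro rfl; omega)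
  have hy : 0 < y := Nat.pos_of_ne_zero (by rintro rfl; omega)
  rcases Nat.eq_zero_or_pos b with rfl | hb
  · obtain ⟨rfl, rfl⟩ : a = 1 ∧ y = 1 := by simpa using h
    simp [W_one_left, W_one_right, qInt, Finset.sum_range_succ]
  rcases Nat.eq_zero_or_pos x with rfl | hx
  · obtain ⟨rfl, rfl⟩ : a = 1 ∧ y = 1 := by simpa using h
    rw [add_comm 1 b]
    simp only [zero_add, W_one_right, qInt, geom_sum_succ, W_one_left, Finset.range_one,
      Finset.sum_singleton, pow_zero, Nat.div_one, pow_one]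
    ring
  have hexp := div_eq_of_mul_eq_mul_add_one h hb
  rcases le_or_gt a x with hax | hxa
  · obtain ⟨f, ra, rb, hxf, hyf, hra, hrb, hdet⟩ :=
      exists_eq_mul_add_of_mul_eq_mul_add_one h ha hb
    have hby : b ≤ y := by nlinarith
    refine W_add_of_le_of_eq_mul_add ha hb hax hby hxf hyf hra.le hrb ?_ ?_
    · have h' := sub_mul_eq_of_mul_eq_mul_add_one hdet hra.le hrb
      rw [W_add_of_mul_eq_mul_add_one h', div_eq_of_mul_eq_mul_add_one hdet hb, hexp]
    · have h' := mul_sub_eq_of_mul_eq_mul_add_one h hax hby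
      rw [W_add_of_mul_eq_mul_add_one h', div_eq_of_mul_eq_mul_add_one h' hb, hexp]
  rcases Nat.lt_or_ge 1 y with hy2 | hy1
  · obtain ⟨k, sb, sa, hbk, hak, hsb, hsa, hdet⟩ :=
      exists_eq_mul_add_of_mul_eq_mul_add_one (a := y) (x := b) (b := x) (y := a)
        (by linarith) hy hx
    have hsb_pos : 1 ≤ sb := by
      by_contra! hsb_pos
      have : y * sa = 1 := by simpa [Nat.lt_one_iff.mp hsb_pos] using hdet
      rw [mul_eq_one] at this
      omega
    have hdet' : sa * y = sb * x + 1 := by linarith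
    have hyb : y < b := by nlinarith
    refine W_add_of_gt_of_eq_mul_add hx hy hxa hyb hak hbk (by nlinarith) hsa hsb_pos hsb.le ?_ ?_
    · have h' := mul_sub_eq_of_mul_eq_mul_add_one hdet' hsa hsb.le
      rw [W_add_of_mul_eq_mul_add_one h', div_eq_of_mul_eq_mul_add_one h' hsb_pos,
        div_eq_of_mul_eq_mul_add_one hdet' hsb_pos]
    · exact W_add_of_mul_eq_mul_add_one (sub_mul_eq_of_mul_eq_mul_add_one h hxa.le hyb.le)
  · obtain rfl : y = 1 := by omega
    rw [mul_one] at h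
    have h' := sub_mul_eq_of_mul_eq_mul_add_one (y := 1) (by rw [mul_one, h]) hxa.le hb
    rw [Nat.div_one]
    exact W_add_one_of_eq_mul_add_one hx hb h (by simpa using W_add_of_mul_eq_mul_add_one h')
termination_by a + x + b + y
decreasing_by all_goals omega

theorem W_farey_sum_general (a x b y : ℕ)
    (hax : a ≤ x) (hb : 1 ≤ b)
    (h : a * y = b * x + 1) :
    W (a + b) (x + y) = W a x + X ^ ((x + y - 1) / y) * W b y := by
  have hy : 2 ≤ y := by
    by_contra! hy
    interval_cases y <;> nlinarith
  have hyx : ¬ y ∣ x := fun hyx => by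
    have : y ∣ 1 := (Nat.dvd_add_right (dvd_mul_of_dvd_right hyx b)).mp (h ▸ dvd_mul_left y a)
    exact absurd (Nat.le_of_dvd one_pos this) (by omega)
  have hx : 1 ≤ x := Nat.pos_of_ne_zero (by rintro rfl; simp at hyx)
  have hexp : (x + y - 1) / y = x / y + 1 := by
    rw [show x + y - 1 = (x - 1) + y * 1 by omega, Nat.add_mul_div_left _ _ (by omega),
      ← Nat.succ_div_of_not_dvd (by rwa [Nat.sub_add_cancel hx]), Nat.sub_add_cancel hx]
  rw [hexp]
  exact W_add_of_mul_eq_mul_add_one h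

/-- For Farey neighbors `x/a`, `y/b ≥ 1` (`ay - bx = 1`):
`(a+b, x+y)_q = (a, x)_q + q^{⌈x/y⌉}·(b, y)_q` (here `⌈x/y⌉ = (x + y - 1)/y`). -/
theorem W_farey_sum (a x b y : ℕ)
    (ha : 1 ≤ a) (hax : a ≤ x) (hb : 1 ≤ b) (hby : b ≤ y)
    (h : a * y = b * x + 1) :
    W (a + b) (x + y) = W a x + X ^ ((x + y - 1) / y) * W b y :=
  W_farey_sum_general a x b y hax hb h
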